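/- arXiv:2208.10451 — 3 statements merged into one kernel-verified Lean document; each statement's English description precedes it below -/
import Mathlib

section
/- Let k ≥ 1, L > 0, and 0 < η ≤ 1/(2L). Let λ' ∈ Δ_k with λ'_i > 0 for all i, let h : Δ_k → ℝ, and let g ∈ ℝ^k satisfy, for all μ ∈ Δ_k: (i) h(μ) ≤ h(λ') + ⟨g, μ − λ'⟩ (concavity linearization at λ'), and (ii) h(μ) ≥ h(λ') + ⟨g, μ − λ'⟩ − (L/2)‖μ − λ'‖₁² (ℓ₁-smoothness lower bound). Define the exponential-weights update λ ∈ Δ_k by λ_i = λ'_i exp(η g_i) / Σ_j λ'_j exp(η g_j). Then for every μ ∈ Δ_k: h(μ) − h(λ) ≤ (1/η)(KL(μ‖λ') − KL(μ‖λ)). -/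
open Finset

/-- Kullback–Leibler divergence on the probability simplex (convention
`0 log 0 = 0`, which holds since `Real.log 0 = 0`). -/
noncomputable def KL {k : ℕ} (μ ν : Fin k → ℝ) : ℝ :=
  ∑ i, μ i * Real.log (μ i / ν i)

lemma ineqA {t : ℝ} (ht0 : 0 ≤ t) (ht1 : t ≤ 1) :
    t - 1 + (1 - t) ^ 2 / 2 ≤ t * Real.log t := by
  rcases eq_or_lt_of_le ht0 with h0 | h0
  · simp [← h0]; norm_num
  · set G : ℝ → ℝ := fun x => x * Real.log x - (x - 1 + (1 - x) ^ 2 / 2) with hG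
    have key : AntitoneOn G (Set.Ioc 0 1) := by
      apply antitoneOn_of_deriv_nonpos (convex_Ioc 0 1)
      · apply ContinuousOn.sub
        · exact continuousOn_id.mul (Real.continuousOn_log.mono (by
            intro x hx; exact ne_of_gt hx.1))
        · fun_prop
      · intro x hx
        rw [interior_Ioc] at hx
        have hd : HasDerivAt G ((Real.log x + 1) - (1 + 2 * (1 - x) ^ 1 * (0 - 1) / 2)) x := by
          exact (Real.hasDerivAt_mul_log (ne_of_gt hx.1)).sub
            (((hasDerivAt_id x).sub_const 1).add
              ((((hasDerivAt_const x (1:ℝ)).sub (hasDerivAt_id x)).pow 2).div_const 2))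
        exact hd.differentiableAt.differentiableWithinAt
      · intro x hx
        rw [interior_Ioc] at hx
        have hd : HasDerivAt G ((Real.log x + 1) - (1 + 2 * (1 - x) ^ 1 * (0 - 1) / 2)) x := by
          exact (Real.hasDerivAt_mul_log (ne_of_gt hx.1)).sub
            (((hasDerivAt_id x).sub_const 1).add
              ((((hasDerivAt_const x (1:ℝ)).sub (hasDerivAt_id x)).pow 2).div_const 2))
        rw [hd.deriv]
        have := Real.log_le_sub_one_of_pos hx.1
        nlinarith
    have h1 : (1:ℝ) ∈ Set.Ioc (0:ℝ) 1 := by constructor <;> norm_num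
    have ht : t ∈ Set.Ioc (0:ℝ) 1 := ⟨h0, ht1⟩
    have := key ht h1 ht1
    simp only [hG, Real.log_one] at this
    nlinarith [this]

lemma ineqB {u : ℝ} (hu0 : 0 < u) (hu1 : u ≤ 1) :
    1 - u + (1 - u) ^ 2 / 2 ≤ -Real.log u := by
  set F : ℝ → ℝ := fun x => -Real.log x - (1 - x + (1 - x) ^ 2 / 2) with hF
  have key : AntitoneOn F (Set.Ioc 0 1) := by
    apply antitoneOn_of_deriv_nonpos (convex_Ioc 0 1)
    · apply ContinuousOn.sub
      · exact (Real.continuousOn_log.mono (by intro x hx; exact ne_of_gt hx.1)).neg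
      · fun_prop
    · intro x hx
      rw [interior_Ioc] at hx
      have hd : HasDerivAt F (-x⁻¹ - ((0 - 1) + 2 * (1 - x) ^ 1 * (0 - 1) / 2)) x := by
        exact ((Real.hasDerivAt_log (ne_of_gt hx.1)).neg).sub
          (((hasDerivAt_const x (1:ℝ)).sub (hasDerivAt_id x)).add
            ((((hasDerivAt_const x (1:ℝ)).sub (hasDerivAt_id x)).pow 2).div_const 2))
      exact hd.differentiableAt.differentiableWithinAt
    · intro x hx
      rw [interior_Ioc] at hx
      have hd : HasDerivAt F (-x⁻¹ - ((0 - 1) + 2 * (1 - x) ^ 1 * (0 - 1) / 2)) x := by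
        exact ((Real.hasDerivAt_log (ne_of_gt hx.1)).neg).sub
          (((hasDerivAt_const x (1:ℝ)).sub (hasDerivAt_id x)).add
            ((((hasDerivAt_const x (1:ℝ)).sub (hasDerivAt_id x)).pow 2).div_const 2))
      rw [hd.deriv]
      have h1 : 0 < x := hx.1
      have h2 : x * x⁻¹ = 1 := mul_inv_cancel₀ (ne_of_gt h1)
      nlinarith [sq_nonneg (x - 1)]
  have h1 : (1:ℝ) ∈ Set.Ioc (0:ℝ) 1 := by constructor <;> norm_num
  have := key ⟨hu0, hu1⟩ h1 hu1
  simp only [hF, Real.log_one] at this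
  nlinarith [this]


lemma pointwise_kl {p q : ℝ} (hp : 0 ≤ p) (hq : 0 < q) :
    p - q + (p - q) ^ 2 / (2 * (p + q)) ≤ p * Real.log (p / q) := by
  have hpq : 0 < p + q := by linarith
  rcases le_or_gt p q with hle | hlt
  · -- t = p/q ∈ [0,1]
    set t := p / q with htdef
    have ht0 : 0 ≤ t := div_nonneg hp hq.le
    have ht1 : t ≤ 1 := (div_le_one hq).2 hle
    have hA := ineqA ht0 ht1
    have hqt : p = q * t := by rw [htdef]; field_simp
    have hmul := mul_le_mul_of_nonneg_left hA hq.le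
    have key : p - q + (p - q) ^ 2 / (2 * q) ≤ p * Real.log (p / q) := by
      have h1 : q * (t - 1 + (1 - t) ^ 2 / 2) = p - q + (p - q) ^ 2 / (2 * q) := by
        rw [hqt]; field_simp; ring
      calc p - q + (p - q) ^ 2 / (2 * q) = q * (t - 1 + (1 - t) ^ 2 / 2) := h1.symm
        _ ≤ q * (t * Real.log t) := hmul
        _ = p * Real.log (p / q) := by rw [← htdef, hqt]; ring
    refine le_trans ?_ key
    have : (p - q) ^ 2 / (2 * (p + q)) ≤ (p - q) ^ 2 / (2 * q) :=
      div_le_div_of_nonneg_left (sq_nonneg _) (by linarith) (by linarith)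
    linarith
  · -- u = q/p ∈ (0,1)
    have hp0 : 0 < p := lt_trans hq hlt
    set u := q / p with hudef
    have hu0 : 0 < u := div_pos hq hp0
    have hu1 : u ≤ 1 := le_of_lt ((div_lt_one hp0).2 hlt)
    have hB := ineqB hu0 hu1
    have hlogeq : Real.log (p / q) = -Real.log u := by
      rw [hudef, ← Real.log_inv]
      congr 1
      field_simp
    have hmul := mul_le_mul_of_nonneg_left hB hp0.le
    have hqu : q = p * u := by rw [hudef]; field_simp
    have key : p - q + (p - q) ^ 2 / (2 * p) ≤ p * Real.log (p / q) := by
      have h1 : p * (1 - u + (1 - u) ^ 2 / 2) = p - q + (p - q) ^ 2 / (2 * p) := by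
        rw [hqu]; field_simp
      calc p - q + (p - q) ^ 2 / (2 * p) = p * (1 - u + (1 - u) ^ 2 / 2) := h1.symm
        _ ≤ p * (-Real.log u) := hmul
        _ = p * Real.log (p / q) := by rw [hlogeq]
    refine le_trans ?_ key
    have : (p - q) ^ 2 / (2 * (p + q)) ≤ (p - q) ^ 2 / (2 * p) :=
      div_le_div_of_nonneg_left (sq_nonneg _) (by linarith) (by linarith)
    linarith

lemma pinsker_lite {k : ℕ} {p q : Fin k → ℝ}
    (hp : p ∈ stdSimplex ℝ (Fin k)) (hq : q ∈ stdSimplex ℝ (Fin k))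
    (hqpos : ∀ i, 0 < q i) :
    (∑ i, |p i - q i|) ^ 2 ≤ 4 * KL p q := by
  have hpq : ∀ i, 0 < p i + q i := fun i => add_pos_of_nonneg_of_pos (hp.1 i) (hqpos i)
  -- KL lower bound
  have hKL : ∑ i, (p i - q i) ^ 2 / (2 * (p i + q i)) ≤ KL p q := by
    have : ∑ i, (p i - q i + (p i - q i) ^ 2 / (2 * (p i + q i))) ≤ KL p q :=
      Finset.sum_le_sum fun i _ => pointwise_kl (hp.1 i) (hqpos i)
    rw [Finset.sum_add_distrib] at this
    have hsum : ∑ i, (p i - q i) = 0 := by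
      rw [Finset.sum_sub_distrib, hp.2, hq.2]; ring
    linarith
  -- Cauchy–Schwarz
  have hCS := Finset.sum_mul_sq_le_sq_mul_sq Finset.univ
    (fun i => Real.sqrt (p i + q i)) (fun i => |p i - q i| / Real.sqrt (p i + q i))
  have h1 : ∀ i : Fin k, Real.sqrt (p i + q i) * (|p i - q i| / Real.sqrt (p i + q i))
      = |p i - q i| := by
    intro i
    rw [mul_div_assoc']
    exact mul_div_cancel_left₀ _ (Real.sqrt_ne_zero'.2 (hpq i))
  have h2 : ∀ i : Fin k, Real.sqrt (p i + q i) ^ 2 = p i + q i :=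
    fun i => Real.sq_sqrt (hpq i).le
  have h3 : ∀ i : Fin k, (|p i - q i| / Real.sqrt (p i + q i)) ^ 2
      = (p i - q i) ^ 2 / (p i + q i) := by
    intro i
    rw [div_pow, sq_abs, h2 i]
  simp only [h1] at hCS
  have h4 : ∑ i, Real.sqrt (p i + q i) ^ 2 = 2 := by
    rw [Finset.sum_congr rfl fun i _ => h2 i, Finset.sum_add_distrib, hp.2, hq.2]; norm_num
  have h5 : ∑ i, (|p i - q i| / Real.sqrt (p i + q i)) ^ 2
      = ∑ i, (p i - q i) ^ 2 / (p i + q i) :=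
    Finset.sum_congr rfl fun i _ => h3 i
  rw [h4, h5] at hCS
  have h6 : ∑ i, (p i - q i) ^ 2 / (p i + q i)
      = 2 * ∑ i, (p i - q i) ^ 2 / (2 * (p i + q i)) := by
    rw [Finset.mul_sum]
    refine Finset.sum_congr rfl fun i _ => ?_
    rw [mul_div_assoc', mul_div_mul_left _ _ (two_ne_zero (α := ℝ))]
  rw [h6] at hCS
  linarith


/-- One-step mirror-ascent regret inequality for the exponential-weights
update: if `h` is concave-linearized at `λ'` by `g` and `L`-smooth w.r.t. `ℓ₁`
around `λ'`, and `0 < η ≤ 1/(2L)`, then the exponential-weights update `λ`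
satisfies `h(μ) − h(λ) ≤ (1/η)(KL(μ‖λ') − KL(μ‖λ))` for every `μ ∈ Δ_k`. -/
theorem exp_weights_regret_step
    (k : ℕ) (hk : 1 ≤ k) (L : ℝ) (hL : 0 < L)
    (η : ℝ) (hη : 0 < η) (hηL : η ≤ 1 / (2 * L))
    (l' : Fin k → ℝ) (hl' : l' ∈ stdSimplex ℝ (Fin k)) (hl'pos : ∀ i, 0 < l' i)
    (h : (Fin k → ℝ) → ℝ) (g : Fin k → ℝ)
    (hconc : ∀ μ ∈ stdSimplex ℝ (Fin k),
      h μ ≤ h l' + ∑ i, g i * (μ i - l' i))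
    (hsmooth : ∀ μ ∈ stdSimplex ℝ (Fin k),
      h μ ≥ h l' + ∑ i, g i * (μ i - l' i) - (L / 2) * (∑ i, |μ i - l' i|) ^ 2)
    (l : Fin k → ℝ)
    (hl : ∀ i, l i = l' i * Real.exp (η * g i) / ∑ j, l' j * Real.exp (η * g j)) :
    ∀ μ ∈ stdSimplex ℝ (Fin k),
      h μ - h l ≤ (1 / η) * (KL μ l' - KL μ l) := by
  set Z : ℝ := ∑ j, l' j * Real.exp (η * g j) with hZdef
  have hZ : 0 < Z := by
    apply Finset.sum_pos
    · intro i _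
      exact mul_pos (hl'pos i) (Real.exp_pos _)
    · exact Finset.univ_nonempty_iff.2 (Fin.pos_iff_nonempty.1 hk)
  have hlpos : ∀ i, 0 < l i := by
    intro i
    rw [hl i]
    exact div_pos (mul_pos (hl'pos i) (Real.exp_pos _)) hZ
  have hlsum : ∑ i, l i = 1 := by
    rw [Finset.sum_congr rfl fun i _ => hl i, ← Finset.sum_div, ← hZdef,
      div_self hZ.ne']
  have hlmem : l ∈ stdSimplex ℝ (Fin k) := ⟨fun i => (hlpos i).le, hlsum⟩
  have hlog : ∀ i, Real.log (l i) = Real.log (l' i) + η * g i - Real.log Z := by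
    intro i
    rw [hl i, Real.log_div (mul_pos (hl'pos i) (Real.exp_pos _)).ne' hZ.ne',
      Real.log_mul (hl'pos i).ne' (Real.exp_pos _).ne', Real.log_exp]
  have sumlin : ∀ v : Fin k → ℝ, (∑ i, v i = 1) →
      ∑ i, v i * (η * g i - Real.log Z) = η * (∑ i, g i * v i) - Real.log Z := by
    intro v hv
    have e : ∀ i : Fin k, v i * (η * g i - Real.log Z)
        = η * (g i * v i) - Real.log Z * v i := fun i => by ring
    rw [Finset.sum_congr rfl fun i _ => e i, Finset.sum_sub_distrib,
      ← Finset.mul_sum, ← Finset.mul_sum, hv, mul_one]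
  -- KL(l, l') identity
  have hKLl : KL l l' = η * (∑ i, g i * l i) - Real.log Z := by
    unfold KL
    rw [← sumlin l hlsum]
    refine Finset.sum_congr rfl fun i _ => ?_
    rw [Real.log_div (hlpos i).ne' (hl'pos i).ne', hlog i]
    ring
  intro μ hμ
  -- KL difference identity
  have hKLdiff : KL μ l' - KL μ l = η * (∑ i, g i * μ i) - Real.log Z := by
    unfold KL
    rw [← Finset.sum_sub_distrib, ← sumlin μ hμ.2]
    refine Finset.sum_congr rfl fun i _ => ?_
    rcases eq_or_lt_of_le (hμ.1 i) with h0 | h0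
    · simp [← h0]
    · rw [Real.log_div h0.ne' (hl'pos i).ne', Real.log_div h0.ne' (hlpos i).ne',
        hlog i]
      ring
  -- Pinsker-type bound
  have hpinsker := pinsker_lite hlmem hl' hl'pos
  have hKLnn : 0 ≤ KL l l' := by nlinarith [sq_nonneg (∑ i, |l i - l' i|)]
  -- bound on h μ - h l
  have H1 := hconc μ hμ
  have H2 := hsmooth l hlmem
  have e1 : ∑ i, g i * (μ i - l' i) = (∑ i, g i * μ i) - ∑ i, g i * l' i := by
    rw [← Finset.sum_sub_distrib]
    exact Finset.sum_congr rfl fun i _ => mul_sub _ _ _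
  have e2 : ∑ i, g i * (l i - l' i) = (∑ i, g i * l i) - ∑ i, g i * l' i := by
    rw [← Finset.sum_sub_distrib]
    exact Finset.sum_congr rfl fun i _ => mul_sub _ _ _
  have h2L : 2 * L ≤ 1 / η := by
    rw [le_div_iff₀ hη]
    have := (le_div_iff₀ (by positivity : (0:ℝ) < 2 * L)).1 hηL
    linarith
  -- final assembly
  have key : (L / 2) * (∑ i, |l i - l' i|) ^ 2 ≤ (1 / η) * KL l l' := by
    have t1 : (L / 2) * (∑ i, |l i - l' i|) ^ 2 ≤ (L / 2) * (4 * KL l l') :=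
      mul_le_mul_of_nonneg_left hpinsker (by positivity)
    have t2 : (2 * L) * KL l l' ≤ (1 / η) * KL l l' :=
      mul_le_mul_of_nonneg_right h2L hKLnn
    nlinarith
  have rhs_eq : (1 / η) * (KL μ l' - KL μ l)
      = (∑ i, g i * μ i) - (∑ i, g i * l i) + (1 / η) * KL l l' := by
    rw [hKLdiff, hKLl]
    field_simp
    ring
  rw [rhs_eq]
  rw [e1] at H1
  rw [e2] at H2
  linarith
end

section
/- Let d ≥ 1, k ≥ 1, G ≥ 0, η_θ > 0, η_λ > 0. Let F : ℝ^d × Δ_k → ℝ be such that θ ↦ F(θ, λ) is G-Lipschitz for every λ ∈ Δ_k, and suppose P(θ) := max_{λ ∈ Δ_k} F(θ, λ) is attained at some λ*(θ) for every θ. Let (θ_t)_{t ≥ 0} in ℝ^d and (λ_t)_{t ≥ 0} in Δ_k (with every λ_t having strictly positive entries) satisfy, for every t ≥ 1: (i) ‖θ_t − θ_{t−1}‖₂ ≤ η_θ G, and (ii) the mirror-ascent regret inequality F(θ_{t−1}, μ) − F(θ_{t−1}, λ_t) ≤ (1/η_λ)(KL(μ‖λ_{t−1}) − KL(μ‖λ_t))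 for all μ ∈ Δ_k. Define Δ_t := P(θ_t) − F(θ_t, λ_t). Then for every t ≥ 1 and every 0 ≤ τ ≤ t − 1: Δ_{t−1} ≤ η_θ G²(2t − 2τ − 1) + (F(θ_t, λ_t) − F(θ_{t−1}, λ_{t−1})) + (1/η_λ)(KL(λ*(θ_τ)‖λ_{t−1}) − KL(λ*(θ_τ)‖λ_t)). -/
/-!
Write `P(θ) = F(θ, λ*(θ))`. As a maximum of `G`-Lipschitz functions, `P` is `G`-Lipschitz, and
the iterates `θ_t` drift by at most `η_θ G` per step, so `P(θ_{t-1}) ≤ F(θ_τ, λ*(θ_τ)) + G d` and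
`F(θ_τ, λ*(θ_τ)) ≤ F(θ_{t-1}, λ*(θ_τ)) + G d` with `d = ‖θ_{t-1} - θ_τ‖ ≤ (t - 1 - τ) η_θ G`.
The regret inequality with comparator `λ*(θ_τ)` replaces `F(θ_{t-1}, λ*(θ_τ))` by
`F(θ_{t-1}, λ_t)` plus the KL difference, and one more Lipschitz step moves it to `F(θ_t, λ_t)`.
-/

open Finset

theorem dist_le_mul_of_dist_succ_le {α : Type*} [PseudoMetricSpace α] {f : ℕ → α} {c : ℝ}
    (hf : ∀ n, dist (f n) (f (n + 1)) ≤ c) {m n : ℕ} (hmn : m ≤ n) :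
    dist (f m) (f n) ≤ ((n : ℝ) - m) * c :=
  calc dist (f m) (f n) ≤ ∑ _ ∈ Finset.Ico m n, c := dist_le_Ico_sum_of_dist_le hmn fun _ _ => hf _
    _ = ((n : ℝ) - m) * c := by simp [Nat.cast_sub hmn]

theorem apply_argmax_sub_apply_argmax_le {X Y : Type*} [PseudoMetricSpace X]
    {F : X → Y → ℝ} {S : Set Y} {ystar : X → Y} {G : ℝ}
    (hmem : ∀ x, ystar x ∈ S) (hmax : ∀ x, ∀ y ∈ S, F x y ≤ F x (ystar x))
    (hLip : ∀ y ∈ S, ∀ x x', |F x y - F x' y| ≤ G * dist x x') (x x' : X) :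
    F x (ystar x) - F x' (ystar x') ≤ G * dist x x' := by
  have hmove := (le_abs_self _).trans (hLip _ (hmem x) x x')
  linarith [hmax x' (ystar x) (hmem x)]

theorem dual_error_recursion_general
    (d k : ℕ)
    (G ηθ ηl : ℝ) (hG : 0 ≤ G)
    (F : EuclideanSpace ℝ (Fin d) → (Fin k → ℝ) → ℝ)
    (lstar : EuclideanSpace ℝ (Fin d) → (Fin k → ℝ))
    (hlstar_mem : ∀ θ, lstar θ ∈ stdSimplex ℝ (Fin k))
    (hlstar_max : ∀ θ, ∀ μ ∈ stdSimplex ℝ (Fin k), F θ μ ≤ F θ (lstar θ))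
    (hLip : ∀ l ∈ stdSimplex ℝ (Fin k), ∀ θ θ' : EuclideanSpace ℝ (Fin d),
      |F θ l - F θ' l| ≤ G * ‖θ - θ'‖)
    (θseq : ℕ → EuclideanSpace ℝ (Fin d)) (lseq : ℕ → (Fin k → ℝ))
    (hlseq_mem : ∀ t, lseq t ∈ stdSimplex ℝ (Fin k))
    (hstep : ∀ t : ℕ, 1 ≤ t → ‖θseq t - θseq (t - 1)‖ ≤ ηθ * G)
    (hregret : ∀ t : ℕ, 1 ≤ t → ∀ μ ∈ stdSimplex ℝ (Fin k),
      F (θseq (t - 1)) μ - F (θseq (t - 1)) (lseq t)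
        ≤ (1 / ηl) * (KL μ (lseq (t - 1)) - KL μ (lseq t))) :
    ∀ t τ : ℕ, 1 ≤ t → τ ≤ t - 1 →
      F (θseq (t - 1)) (lstar (θseq (t - 1))) - F (θseq (t - 1)) (lseq (t - 1))
        ≤ ηθ * G ^ 2 * (2 * (t : ℝ) - 2 * (τ : ℝ) - 1)
          + (F (θseq t) (lseq t) - F (θseq (t - 1)) (lseq (t - 1)))
          + (1 / ηl) *
              (KL (lstar (θseq τ)) (lseq (t - 1)) - KL (lstar (θseq τ)) (lseq t)) := by
  intro t τ ht hτ
  obtain ⟨s, rfl⟩ : ∃ s, t = s + 1 := ⟨t - 1, by omega⟩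
  simp only [Nat.add_sub_cancel] at hτ ⊢
  have hLip' : ∀ l ∈ stdSimplex ℝ (Fin k), ∀ θ θ', |F θ l - F θ' l| ≤ G * dist θ θ' := by
    simpa only [dist_eq_norm] using hLip
  have hstep' : ∀ n, dist (θseq n) (θseq (n + 1)) ≤ ηθ * G := fun n => by
    simpa [dist_eq_norm'] using hstep (n + 1) (by omega)
  have hdrift : G * dist (θseq τ) (θseq s) ≤ G * (((s : ℝ) - τ) * (ηθ * G)) :=
    mul_le_mul_of_nonneg_left (dist_le_mul_of_dist_succ_le hstep' hτ) hG
  have hlast : G * dist (θseq s) (θseq (s + 1)) ≤ G * (ηθ * G) :=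
    mul_le_mul_of_nonneg_left (hstep' s) hG
  have hP := apply_argmax_sub_apply_argmax_le hlstar_mem hlstar_max hLip' (θseq s) (θseq τ)
  have hτs := (le_abs_self _).trans (hLip' _ (hlstar_mem (θseq τ)) (θseq τ) (θseq s))
  have hreg : F (θseq s) (lstar (θseq τ)) - F (θseq s) (lseq (s + 1))
      ≤ 1 / ηl * (KL (lstar (θseq τ)) (lseq s) - KL (lstar (θseq τ)) (lseq (s + 1))) := by
    simpa using hregret (s + 1) (by omega) _ (hlstar_mem (θseq τ))
  have hmove := (le_abs_self _).trans (hLip' _ (hlseq_mem (s + 1)) (θseq s) (θseq (s + 1)))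
  rw [dist_comm] at hP
  push_cast
  linarith

/-- Deterministic recursion for the dual error
`Δ_t = P(θ_t) − F(θ_t, λ_t)` along the gradient-descent / mirror-ascent
iterates: for every `t ≥ 1` and `0 ≤ τ ≤ t − 1`,
`Δ_{t−1} ≤ η_θ G²(2t − 2τ − 1) + (F(θ_t,λ_t) − F(θ_{t−1},λ_{t−1}))
           + (1/η_λ)(KL(λ*(θ_τ)‖λ_{t−1}) − KL(λ*(θ_τ)‖λ_t))`. -/
theorem dual_error_recursion
    (d k : ℕ) (hd : 1 ≤ d) (hk : 1 ≤ k)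
    (G ηθ ηl : ℝ) (hG : 0 ≤ G) (hηθ : 0 < ηθ) (hηl : 0 < ηl)
    (F : EuclideanSpace ℝ (Fin d) → (Fin k → ℝ) → ℝ)
    (lstar : EuclideanSpace ℝ (Fin d) → (Fin k → ℝ))
    (hlstar_mem : ∀ θ, lstar θ ∈ stdSimplex ℝ (Fin k))
    (hlstar_max : ∀ θ, ∀ μ ∈ stdSimplex ℝ (Fin k), F θ μ ≤ F θ (lstar θ))
    (hLip : ∀ l ∈ stdSimplex ℝ (Fin k), ∀ θ θ' : EuclideanSpace ℝ (Fin d),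
      |F θ l - F θ' l| ≤ G * ‖θ - θ'‖)
    (θseq : ℕ → EuclideanSpace ℝ (Fin d)) (lseq : ℕ → (Fin k → ℝ))
    (hlseq_mem : ∀ t, lseq t ∈ stdSimplex ℝ (Fin k))
    (hlseq_pos : ∀ t i, 0 < lseq t i)
    (hstep : ∀ t : ℕ, 1 ≤ t → ‖θseq t - θseq (t - 1)‖ ≤ ηθ * G)
    (hregret : ∀ t : ℕ, 1 ≤ t → ∀ μ ∈ stdSimplex ℝ (Fin k),
      F (θseq (t - 1)) μ - F (θseq (t - 1)) (lseq t)
        ≤ (1 / ηl) * (KL μ (lseq (t - 1)) - KL μ (lseq t))) :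
    ∀ t τ : ℕ, 1 ≤ t → τ ≤ t - 1 →
      F (θseq (t - 1)) (lstar (θseq (t - 1))) - F (θseq (t - 1)) (lseq (t - 1))
        ≤ ηθ * G ^ 2 * (2 * (t : ℝ) - 2 * (τ : ℝ) - 1)
          + (F (θseq t) (lseq t) - F (θseq (t - 1)) (lseq (t - 1)))
          + (1 / ηl) *
              (KL (lstar (θseq τ)) (lseq (t - 1)) - KL (lstar (θseq τ)) (lseq t)) :=
  dual_error_recursion_general d k G ηθ ηl hG F lstar hlstar_mem hlstar_max hLip θseq lseq hlseq_mem
    hstep hregret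
end

section
/- Let d ≥ 1, L > 0, G ≥ 0, η > 0. Let P : ℝ^d → ℝ be L-weakly convex (i.e. γ ↦ P(γ) + (L/2)‖γ‖₂² is convex) with Moreau envelope P_{1/2L}(θ) = inf_γ (P(γ) + L‖γ − θ‖₂²). Fix θ ∈ ℝ^d and suppose the infimum defining P_{1/2L}(θ) is attained at θ̂. Let h : ℝ^d → ℝ satisfy h ≤ P pointwise, and let v ∈ ℝ^d with ‖v‖₂ ≤ G be a weak subgradient of h at θ, i.e. h(γ) ≥ h(θ) + ⟨v, γ − θ⟩ − (L/2)‖γ − θ‖₂² for all γ. Then the gradient step θ⁺ := θ − η v satisfies P_{1/2L}(θ⁺) ≤ P_{1/2L}(θ) + 2ηL(P(θ) − h(θ)) − ηL²‖θ − θ̂‖₂² + η²L G². -/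
/-!
Evaluating the envelope at `θ⁺` at the old proximal point `θ̂` gives
`P_{1/2L}(θ⁺) ≤ P_{1/2L}(θ) + 2ηL⟪v, θ̂ - θ⟫ + η²L‖v‖²`, and the weak-subgradient inequality at
`θ̂`, together with `h ≤ P` and `P(θ̂) + L‖θ̂ - θ‖² ≤ P(θ)`, bounds `⟪v, θ̂ - θ⟫` by
`P(θ) - h(θ) - (L/2)‖θ̂ - θ‖²`. Weak convexity is what makes the infimum at `θ⁺` finite: the
proximal objective `γ ↦ P(γ) + L‖γ - θ‖²` is `L`-strongly convex, hence grows like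
`(L/2)‖γ - θ̂‖²` away from its minimiser.
-/

open Filter Set Topology
open scoped RealInnerProductSpace

section ProximalObjective

variable {E : Type*} [NormedAddCommGroup E] [InnerProductSpace ℝ E]

theorem ConvexOn.strongConvexOn_add_mul_sq_norm_sub {s : Set E} {f : E → ℝ} {L : ℝ}
    (hf : ConvexOn ℝ s fun x => f x + L / 2 * ‖x‖ ^ 2) (θ : E) :
    StrongConvexOn s L fun x => f x + L * ‖x - θ‖ ^ 2 := by
  rw [strongConvexOn_iff_convex]
  have h_affine : ConvexOn ℝ s fun x => -(2 * L) * ⟪θ, x⟫ + L * ‖θ‖ ^ 2 :=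
    (((-(2 * L)) • innerₛₗ ℝ θ).convexOn hf.1).add_const _
  refine (hf.add h_affine).congr fun x _ => ?_
  simp only [Pi.add_apply, norm_sub_sq_real, real_inner_comm θ x]
  ring

theorem StrongConvexOn.add_sq_norm_sub_le_of_isMinOn {s : Set E} {f : E → ℝ} {m : ℝ} {x₀ x : E}
    (hf : StrongConvexOn s m f) (hmin : IsMinOn f s x₀) (hx₀ : x₀ ∈ s) (hx : x ∈ s) :
    f x₀ + m / 2 * ‖x - x₀‖ ^ 2 ≤ f x := by
  have h_segment : ∀ t ∈ Ioo (0 : ℝ) 1, f x₀ + (1 - t) * (m / 2 * ‖x - x₀‖ ^ 2) ≤ f x := by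
    rintro t ⟨ht₀, ht₁⟩
    have ht₁' : 0 ≤ 1 - t := sub_nonneg.2 ht₁.le
    have h_conv := hf.2 hx hx₀ ht₀.le ht₁' (add_sub_cancel t 1)
    have h_min := isMinOn_iff.1 hmin _ (hf.1 hx hx₀ ht₀.le ht₁' (add_sub_cancel t 1))
    simp only [smul_eq_mul] at h_conv
    refine le_of_mul_le_mul_left ?_ ht₀
    linarith
  have h_lim : Tendsto (fun t : ℝ => f x₀ + (1 - t) * (m / 2 * ‖x - x₀‖ ^ 2)) (𝓝[>] 0)
      (𝓝 (f x₀ + m / 2 * ‖x - x₀‖ ^ 2)) := by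
    have := (show Continuous fun t : ℝ => f x₀ + (1 - t) * (m / 2 * ‖x - x₀‖ ^ 2) by
      fun_prop).tendsto 0
    simpa using this.mono_left nhdsWithin_le_nhds
  exact le_of_tendsto h_lim (mem_of_superset (Ioo_mem_nhdsGT one_pos) h_segment)

theorem bddBelow_range_add_mul_sq_norm_sub {f : E → ℝ} {c L : ℝ} {x₀ θ : E} (hL : 0 ≤ L)
    (h_growth : ∀ x, c + L / 2 * ‖x - x₀‖ ^ 2 ≤ f x + L * ‖x - θ‖ ^ 2) (θ' : E) :
    BddBelow (range fun x => f x + L * ‖x - θ'‖ ^ 2) := by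
  -- Growth plus the parallelogram law give `f x ≥ c + L‖θ - x₀‖² - (L/2)‖x - z‖²`,
  -- a concave quadratic that the added `L‖x - θ'‖²` dominates.
  set z := (2 : ℝ) • θ - x₀
  refine ⟨c + L * ‖θ - x₀‖ ^ 2 - L * ‖θ' - z‖ ^ 2, ?_⟩
  rintro _ ⟨x, rfl⟩
  have h_par := parallelogram_law_with_norm ℝ (x - θ) (θ - x₀)
  rw [sub_add_sub_cancel, show x - θ - (θ - x₀) = x - z by module] at h_par
  have h_tri : ‖x - z‖ ^ 2 ≤ 2 * (‖x - θ'‖ ^ 2 + ‖θ' - z‖ ^ 2) :=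
    (pow_le_pow_left₀ (norm_nonneg _) (norm_sub_le_norm_sub_add_norm_sub x θ' z) 2).trans add_sq_le
  linear_combination h_growth x - L / 2 * h_par + L / 2 * h_tri

end ProximalObjective

theorem moreau_envelope_one_step_descent_general
    (d : ℕ) (L G η : ℝ) (hL : 0 < L) (hη : 0 < η)
    (P : EuclideanSpace ℝ (Fin d) → ℝ)
    (hwc : ConvexOn ℝ Set.univ (fun γ => P γ + (L / 2) * ‖γ‖ ^ 2))
    (θ θhat : EuclideanSpace ℝ (Fin d))
    (hmin : ∀ γ : EuclideanSpace ℝ (Fin d),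
      P θhat + L * ‖θhat - θ‖ ^ 2 ≤ P γ + L * ‖γ - θ‖ ^ 2)
    (h : EuclideanSpace ℝ (Fin d) → ℝ) (hle : ∀ γ, h γ ≤ P γ)
    (v : EuclideanSpace ℝ (Fin d)) (hv : ‖v‖ ≤ G)
    (hsub : ∀ γ : EuclideanSpace ℝ (Fin d),
      h γ ≥ h θ + ⟪v, γ - θ⟫ - (L / 2) * ‖γ - θ‖ ^ 2) :
    (⨅ γ : EuclideanSpace ℝ (Fin d), (P γ + L * ‖γ - (θ - η • v)‖ ^ 2))
      ≤ (⨅ γ : EuclideanSpace ℝ (Fin d), (P γ + L * ‖γ - θ‖ ^ 2))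
        + 2 * η * L * (P θ - h θ) - η * L ^ 2 * ‖θ - θhat‖ ^ 2
        + η ^ 2 * L * G ^ 2 := by
  have h_growth : ∀ γ, P θhat + L * ‖θhat - θ‖ ^ 2 + L / 2 * ‖γ - θhat‖ ^ 2
      ≤ P γ + L * ‖γ - θ‖ ^ 2 := fun γ =>
    (hwc.strongConvexOn_add_mul_sq_norm_sub θ).add_sq_norm_sub_le_of_isMinOn
      (isMinOn_univ_iff.2 hmin) (mem_univ θhat) (mem_univ γ)
  have h_step : (⨅ γ, P γ + L * ‖γ - (θ - η • v)‖ ^ 2)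
      ≤ P θhat + L * ‖θhat - (θ - η • v)‖ ^ 2 :=
    ciInf_le (bddBelow_range_add_mul_sq_norm_sub hL.le h_growth _) θhat
  have h_env : P θhat + L * ‖θhat - θ‖ ^ 2 ≤ ⨅ γ, P γ + L * ‖γ - θ‖ ^ 2 := le_ciInf hmin
  have h_expand : ‖θhat - (θ - η • v)‖ ^ 2
      = ‖θhat - θ‖ ^ 2 + 2 * η * ⟪v, θhat - θ⟫ + η ^ 2 * ‖v‖ ^ 2 := by
    rw [show θhat - (θ - η • v) = θhat - θ + η • v by module, norm_add_sq_real,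
      real_inner_smul_right, norm_smul, Real.norm_of_nonneg hη.le, real_inner_comm]
    ring
  have h_prox : P θhat + L * ‖θhat - θ‖ ^ 2 ≤ P θ := by simpa using hmin θ
  have h_inner : ⟪v, θhat - θ⟫ ≤ P θ - h θ - L / 2 * ‖θhat - θ‖ ^ 2 := by
    linarith [hsub θhat, hle θhat]
  have h_v : ‖v‖ ^ 2 ≤ G ^ 2 := pow_le_pow_left₀ (norm_nonneg v) hv 2
  rw [h_expand] at h_step
  rw [norm_sub_rev θ θhat]
  linear_combination h_step + h_env + 2 * η * L * h_inner + η ^ 2 * L * h_v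

/-- Deterministic one-step descent inequality for the Moreau envelope
`P_{1/2L}(θ) = inf_γ (P(γ) + L‖γ − θ‖²)` along a gradient step `θ⁺ = θ − ηv`,
where `v` (with `‖v‖ ≤ G`) is a weak subgradient of a minorant `h ≤ P` at `θ`:
`P_{1/2L}(θ⁺) ≤ P_{1/2L}(θ) + 2ηL(P(θ) − h(θ)) − ηL²‖θ − θ̂‖² + η²LG²`. -/
theorem moreau_envelope_one_step_descent
    (d : ℕ) (hd : 1 ≤ d) (L G η : ℝ) (hL : 0 < L) (hG : 0 ≤ G) (hη : 0 < η)
    (P : EuclideanSpace ℝ (Fin d) → ℝ)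
    (hwc : ConvexOn ℝ Set.univ (fun γ => P γ + (L / 2) * ‖γ‖ ^ 2))
    (θ θhat : EuclideanSpace ℝ (Fin d))
    (hmin : ∀ γ : EuclideanSpace ℝ (Fin d),
      P θhat + L * ‖θhat - θ‖ ^ 2 ≤ P γ + L * ‖γ - θ‖ ^ 2)
    (h : EuclideanSpace ℝ (Fin d) → ℝ) (hle : ∀ γ, h γ ≤ P γ)
    (v : EuclideanSpace ℝ (Fin d)) (hv : ‖v‖ ≤ G)
    (hsub : ∀ γ : EuclideanSpace ℝ (Fin d),
      h γ ≥ h θ + ⟪v, γ - θ⟫ - (L / 2) * ‖γ - θ‖ ^ 2) :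
    (⨅ γ : EuclideanSpace ℝ (Fin d), (P γ + L * ‖γ - (θ - η • v)‖ ^ 2))
      ≤ (⨅ γ : EuclideanSpace ℝ (Fin d), (P γ + L * ‖γ - θ‖ ^ 2))
        + 2 * η * L * (P θ - h θ) - η * L ^ 2 * ‖θ - θhat‖ ^ 2
        + η ^ 2 * L * G ^ 2 :=
  moreau_envelope_one_step_descent_general d L G η hL hη P hwc θ θhat hmin h hle v hv hsub
end
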